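/- arXiv:2201.08073 — 5 statements merged into one kernel-verified Lean document; each statement's English description precedes it below -/
import Mathlib

section
/- Let G be a finite group, N a normal subgroup of G, and H a subgroup of G containing N. If H is a perfect code of G, then H/N is a perfect code of G/N. -/
/-- A subgroup `H` of `G` is a perfect code of `G` if there is a left transversal `T`
of `H` in `G` with `T = T⁻¹` and `1 ∈ T` (a Cayley transversal). -/
def IsPerfectCode {G : Type*} [Group G] (H : Subgroup G) : Prop :=
  ∃ T : Set G, (1 : G) ∈ T ∧ T⁻¹ = T ∧ ∀ g : G, ∃! t, t ∈ T ∧ g⁻¹ * t ∈ H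

theorem perfect_code_quotient {G : Type*} [Group G] [Finite G]
    (N : Subgroup G) [N.Normal] (H : Subgroup G) (hNH : N ≤ H)
    (h : IsPerfectCode H) :
    IsPerfectCode (H.map (QuotientGroup.mk' N)) := by
  obtain ⟨T, h1, hinv, huniq⟩ := h
  refine ⟨(QuotientGroup.mk' N) '' T, ⟨1, h1, map_one _⟩, ?_, ?_⟩
  · ext x
    rw [Set.mem_inv]
    constructor
    · rintro ⟨t, ht, hx⟩
      exact ⟨t⁻¹, hinv ▸ Set.inv_mem_inv.mpr ht, by rw [map_inv, hx, inv_inv]⟩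
    · rintro ⟨t, ht, rfl⟩
      exact ⟨t⁻¹, hinv ▸ Set.inv_mem_inv.mpr ht, by simp⟩
  · intro g
    induction g using QuotientGroup.induction_on with
    | H g =>
      obtain ⟨t, ⟨ht, htH⟩, huni⟩ := huniq g
      refine ⟨(QuotientGroup.mk' N) t, ⟨⟨t, ht, rfl⟩, ⟨g⁻¹ * t, htH, by simp⟩⟩, ?_⟩
      rintro y ⟨⟨t', ht', rfl⟩, ⟨x, hxH, hx⟩⟩
      have : g⁻¹ * t' ∈ H := by
        have hx' : (QuotientGroup.mk' N) x = (QuotientGroup.mk' N) (g⁻¹ * t') := by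
          rw [hx]; simp
        rw [QuotientGroup.mk'_eq_mk'] at hx'
        obtain ⟨z, hz, hzx⟩ := hx'
        rw [← hzx]
        exact H.mul_mem hxH (hNH hz)
      rw [huni t' ⟨ht', this⟩]
end

section
/- Let G be a finite group, N a normal subgroup of G, and H a subgroup of G containing N. If N is a perfect code of G and H/N is a perfect code of G/N, then H is a perfect code of G. -/
theorem perfect_code_of_quotient {G : Type*} [Group G] [Finite G]
    (N : Subgroup G) [N.Normal] (H : Subgroup G) (hNH : N ≤ H)
    (hN : IsPerfectCode N) (hq : IsPerfectCode (H.map (QuotientGroup.mk' N))) :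
    IsPerfectCode H := by
  obtain ⟨S, hS1, hSinv, hS⟩ := hN
  obtain ⟨Tb, hT1, hTinv, hT⟩ := hq
  -- key: membership in H.map mk' for images of elements
  have hmem : ∀ a : G, QuotientGroup.mk' N a ∈ H.map (QuotientGroup.mk' N) ↔ a ∈ H := by
    intro a
    constructor
    · rintro ⟨h, hh, heq⟩
      have : h⁻¹ * a ∈ N := by
        rw [← QuotientGroup.eq, ← QuotientGroup.mk'_apply, ← QuotientGroup.mk'_apply, heq]
      have : h * (h⁻¹ * a) ∈ H := H.mul_mem hh (hNH this)
      simpa using this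
    · intro ha
      exact ⟨a, ha, rfl⟩
  refine ⟨{s ∈ S | QuotientGroup.mk' N s ∈ Tb}, ⟨hS1, by simpa using hT1⟩, ?_, ?_⟩
  · ext x
    simp only [Set.mem_inv, Set.mem_setOf_eq, map_inv]
    constructor
    · rintro ⟨h1, h2⟩
      refine ⟨by rw [← hSinv]; simpa using h1, ?_⟩
      rw [← hTinv]
      simpa using h2
    · rintro ⟨h1, h2⟩
      refine ⟨by rw [← hSinv] at h1; simpa using h1, ?_⟩
      rw [← hTinv] at h2
      simpa using h2
  · intro g
    obtain ⟨tb, ⟨htbT, htbH⟩, htbu⟩ := hT (QuotientGroup.mk' N g)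
    obtain ⟨x, hx⟩ := QuotientGroup.mk'_surjective N tb
    obtain ⟨s, ⟨hsS, hsN⟩, hsu⟩ := hS x
    have hmks : QuotientGroup.mk' N s = tb := by
      rw [← hx, QuotientGroup.mk'_apply, QuotientGroup.mk'_apply, eq_comm,
        QuotientGroup.eq]
      exact hsN
    refine ⟨s, ⟨⟨hsS, hmks ▸ htbT⟩, ?_⟩, ?_⟩
    · rw [← hmem, map_mul, map_inv, hmks]
      exact htbH
    · rintro s' ⟨⟨hs'S, hs'T⟩, hs'H⟩
      have h1 : QuotientGroup.mk' N s' = tb := by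
        refine htbu _ ⟨hs'T, ?_⟩
        rw [← map_inv, ← map_mul, hmem]
        exact hs'H
      refine hsu s' ⟨hs'S, ?_⟩
      rw [← QuotientGroup.eq, ← QuotientGroup.mk'_apply, ← QuotientGroup.mk'_apply, hx, h1]
end

section
/- Let G be a finite group and H a subgroup of G. If some Sylow 2-subgroup of H is a perfect code of G, then H is a perfect code of G. -/
namespace PCaux

open scoped Pointwise

variable {G : Type*} [Group G]

/-- membership in the double coset `H g H` -/
def DP (H : Subgroup G) (g x : G) : Prop := ∃ h₁ ∈ H, ∃ h₂ ∈ H, x = h₁ * g * h₂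

variable {H : Subgroup G}

lemma dp_self (g : G) : DP H g g := ⟨1, one_mem _, 1, one_mem _, by group⟩

lemma dp_symm {g x : G} (h : DP H g x) : DP H x g := by
  obtain ⟨a, ha, b, hb, rfl⟩ := h
  exact ⟨a⁻¹, inv_mem ha, b⁻¹, inv_mem hb, by group⟩

lemma dp_trans {g x y : G} (h1 : DP H g x) (h2 : DP H x y) : DP H g y := by
  obtain ⟨a, ha, b, hb, rfl⟩ := h1
  obtain ⟨c, hc, d, hd, rfl⟩ := h2
  exact ⟨c * a, mul_mem hc ha, b * d, mul_mem hb hd, by group⟩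

lemma dp_inv {g x : G} (h : DP H g x) : DP H g⁻¹ x⁻¹ := by
  obtain ⟨a, ha, b, hb, rfl⟩ := h
  exact ⟨b⁻¹, inv_mem hb, a⁻¹, inv_mem ha, by group⟩

lemma dp_coset {g x y : G} (h : DP H g x) (hxy : x⁻¹ * y ∈ H) : DP H g y := by
  obtain ⟨a, ha, b, hb, rfl⟩ := h
  refine ⟨a, ha, b * ((a * g * b)⁻¹ * y), mul_mem hb hxy, by group⟩

lemma dp_congr {g x : G} (h : DP H g x) : ∀ y, (DP H g y ↔ DP H x y) :=
  fun _ => ⟨fun h2 => dp_trans (dp_symm h) h2, fun h2 => dp_trans h h2⟩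

/-- the double coset as a set -/
def DC (H : Subgroup G) (g : G) : Set G := {x | DP H g x}

/-- number of left cosets of `H` meeting `X` -/
noncomputable def cnt (H : Subgroup G) (X : Set G) : ℕ :=
  ((QuotientGroup.mk '' X : Set (G ⧸ H))).ncard

/-- the criterion -/
def CritCount (H : Subgroup G) : Prop :=
  ∀ g : G, g * g ∈ H → Odd (cnt H (DC H g)) → ∃ x : G, x * x = 1 ∧ g⁻¹ * x ∈ H

lemma mem_of_mk_mem_image {X : Set G} (hcl : ∀ s ∈ X, ∀ h ∈ H, s * h ∈ X) {y : G}
    (hy : (QuotientGroup.mk y : G ⧸ H) ∈ QuotientGroup.mk '' X) : y ∈ X := by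
  obtain ⟨x, hx, hxy⟩ := hy
  have : x⁻¹ * y ∈ H := (QuotientGroup.eq).1 hxy
  have := hcl x hx _ this
  simpa using this

lemma image_diff_coset {X : Set G} {s₀ : G} :
    (QuotientGroup.mk '' (X \ {y | s₀⁻¹ * y ∈ H}) : Set (G ⧸ H)) =
      (QuotientGroup.mk '' X) \ {QuotientGroup.mk s₀} := by
  ext q
  constructor
  · rintro ⟨y, ⟨hyX, hyC⟩, rfl⟩
    refine ⟨⟨y, hyX, rfl⟩, ?_⟩
    simp only [Set.mem_singleton_iff]
    intro hq
    exact hyC ((QuotientGroup.eq).1 hq.symm)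
  · rintro ⟨⟨y, hyX, rfl⟩, hq⟩
    refine ⟨y, ⟨hyX, fun hc => ?_⟩, rfl⟩
    refine hq ?_
    rw [Set.mem_singleton_iff, QuotientGroup.eq]
    have hc' : s₀⁻¹ * y ∈ H := hc
    simpa using inv_mem hc'


section Fin
variable [Finite G]

lemma cnt_mul_card {X : Set G} (hcl : ∀ s ∈ X, ∀ h ∈ H, s * h ∈ X) :
    cnt H X * Nat.card H = X.ncard := by
  classical
  have key : ∀ (q : (QuotientGroup.mk '' X : Set (G ⧸ H))) (h : H),
      (Quotient.out q.1) * h ∈ X := by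
    rintro ⟨q, hq⟩ h
    apply mem_of_mk_mem_image hcl
    have : (QuotientGroup.mk (Quotient.out q * h) : G ⧸ H) = q := by
      rw [QuotientGroup.mk_mul_of_mem _ h.2, QuotientGroup.out_eq']
    rw [this]; exact hq
  have e : ((QuotientGroup.mk '' X : Set (G ⧸ H)) × H) ≃ X :=
  { toFun := fun p => ⟨Quotient.out p.1.1 * p.2, key p.1 p.2⟩
    invFun := fun x => ⟨⟨QuotientGroup.mk x.1, ⟨x.1, x.2, rfl⟩⟩,
      ⟨(Quotient.out (QuotientGroup.mk x.1 : G ⧸ H))⁻¹ * x.1, by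
        rw [← QuotientGroup.eq, QuotientGroup.out_eq']⟩⟩
    left_inv := by
      rintro ⟨⟨q, hq⟩, h⟩
      have hmk : (QuotientGroup.mk (Quotient.out q * h) : G ⧸ H) = q := by
        rw [QuotientGroup.mk_mul_of_mem _ h.2, QuotientGroup.out_eq']
      refine Prod.ext (Subtype.ext (by simpa using hmk)) (Subtype.ext ?_)
      show (Quotient.out (QuotientGroup.mk (Quotient.out q * (h : G)) : G ⧸ H))⁻¹ * _ = _
      rw [hmk]
      simp [mul_assoc]
    right_inv := by
      rintro ⟨x, hx⟩
      exact Subtype.ext (by simp) }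
  have := Nat.card_congr e
  rw [Nat.card_prod] at this
  rw [cnt, ← Nat.card_coe_set_eq, ← Nat.card_coe_set_eq, this]



/-- the left coset of `c` as a set -/
def Cs (H : Subgroup G) (c : G) : Set G := {y | c⁻¹ * y ∈ H}

lemma mem_Cs_trans {c s y : G} (h1 : c⁻¹ * s ∈ H) (h2 : s⁻¹ * y ∈ H) : c⁻¹ * y ∈ H := by
  have := mul_mem h1 h2; simpa [mul_assoc] using this

lemma diff_inter (X D C : Set G) : (X \ C) ∩ D = (X ∩ D) \ C := by
  ext y; simp only [Set.mem_inter_iff, Set.mem_diff]; tauto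

lemma coset_disj {g c : G} (h : ¬ DP H g c) (X : Set G) :
    (X ∩ DC H g) \ Cs H c = X ∩ DC H g := by
  ext y
  simp only [Set.mem_diff, Set.mem_inter_iff, and_iff_left_iff_imp]
  rintro ⟨-, hy⟩ hc
  have hc' : c⁻¹ * y ∈ H := hc
  exact h (dp_coset hy (by simpa [mul_assoc] using inv_mem hc'))

lemma cnt_diff_coset {X : Set G} {s₀ : G} (hs : s₀ ∈ X) :
    cnt H (X \ Cs H s₀) + 1 = cnt H X := by
  have : QuotientGroup.mk '' (X \ Cs H s₀) =
      (QuotientGroup.mk '' X : Set (G ⧸ H)) \ {QuotientGroup.mk s₀} := image_diff_coset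
  rw [cnt, this]
  exact Set.ncard_diff_singleton_add_one ⟨s₀, hs, rfl⟩ (Set.toFinite _)

lemma cnt_one {S : Set G} {s₀ : G} (hs₀ : s₀ ∈ S)
    (hall : ∀ u ∈ S, s₀⁻¹ * u ∈ H) : cnt H S = 1 := by
  have : (QuotientGroup.mk '' S : Set (G ⧸ H)) = {QuotientGroup.mk s₀} := by
    apply Set.eq_singleton_iff_unique_mem.2
    refine ⟨⟨s₀, hs₀, rfl⟩, ?_⟩
    rintro q ⟨u, hu, rfl⟩
    exact ((QuotientGroup.eq).2 (hall u hu)).symm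
  rw [cnt, this, Set.ncard_singleton]

lemma key_ind (hcrit : CritCount H) : ∀ n (S : Set G), S.ncard ≤ n →
    (∀ s ∈ S, ∀ h ∈ H, s * h ∈ S) →
    (∀ g : G, cnt H (S ∩ DC H g) = cnt H (S ∩ DC H g⁻¹)) →
    (∀ g : G, DP H g g⁻¹ →
      (cnt H (S ∩ DC H g) % 2 = cnt H (DC H g) % 2 ∨ S ∩ DC H g = ∅)) →
    ∃ T : Set G, T ⊆ S ∧ (∀ t ∈ T, t⁻¹ ∈ T) ∧ ∀ s ∈ S, ∃! t, t ∈ T ∧ s⁻¹ * t ∈ H := by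
  intro n
  induction n with
  | zero =>
    intro S hcard _ _ _
    have : S = ∅ := by
      rw [← Set.ncard_eq_zero (Set.toFinite _)]; omega
    subst this
    exact ⟨∅, by simp, by simp, by simp⟩
  | succ n ih =>
    intro S hcard hcl hbal hpar
    rcases Set.eq_empty_or_nonempty S with rfl | ⟨s₀, hs₀S⟩
    · exact ⟨∅, by simp, by simp, by simp⟩
    -- the coset of s₀ is contained in S
    have hCsS : ∀ c ∈ S, Cs H c ⊆ S := by
      intro c hc y hy
      have : c * (c⁻¹ * y) ∈ S := hcl c hc _ hy
      simpa [mul_assoc] using this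
    by_cases hpair : ∃ s₁ ∈ S, DP H s₀⁻¹ s₁ ∧ s₀⁻¹ * s₁ ∉ H
    · -- PAIR case
      obtain ⟨s₁, hs₁S, hs₁d, hs₁C⟩ := hpair
      obtain ⟨h₁, hh₁, h₂, hh₂, hs₁eq⟩ := hs₁d
      set x := s₀ * h₁⁻¹ with hxdef
      have hxC : s₀⁻¹ * x ∈ H := by
        simpa [hxdef, mul_assoc] using inv_mem hh₁
      have hxiD : s₁⁻¹ * x⁻¹ ∈ H := by
        have : s₁⁻¹ * x⁻¹ = h₂⁻¹ := by rw [hs₁eq, hxdef]; group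
        rw [this]; exact inv_mem hh₂
      have hxS : x ∈ S := hCsS s₀ hs₀S hxC
      have hxiS : x⁻¹ ∈ S := hCsS s₁ hs₁S hxiD
      -- the two removed cosets
      set S' := (S \ Cs H s₀) \ Cs H s₁ with hS'def
      have hS'sub : S' ⊆ S := fun y hy => hy.1.1
      have hs₀C : s₀⁻¹ * s₀ ∈ H := by simpa using one_mem H
      have hs₀notS' : s₀ ∉ S' := fun h => h.1.2 hs₀C
      have hcard' : S'.ncard ≤ n := by
        have : S'.ncard < S.ncard :=
          Set.ncard_lt_ncard ⟨hS'sub, fun hSS => hs₀notS' (hSS hs₀S)⟩ (Set.toFinite _)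
        omega
      have hcl' : ∀ s ∈ S', ∀ h ∈ H, s * h ∈ S' := by
        rintro s ⟨⟨hsS, hs0⟩, hs1⟩ h hh
        refine ⟨⟨hcl s hsS h hh, fun hc => hs0 ?_⟩, fun hc => hs1 ?_⟩
        · have hc' : s₀⁻¹ * (s * h) ∈ H := hc
          have := mul_mem hc' (inv_mem hh); exact (by simpa [mul_assoc] using this : s₀⁻¹ * s ∈ H)
        · have hc' : s₁⁻¹ * (s * h) ∈ H := hc
          have := mul_mem hc' (inv_mem hh); exact (by simpa [mul_assoc] using this : s₁⁻¹ * s ∈ H)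
      -- doset membership transfer facts
      have pf1 : ∀ g : G, DP H g s₀ ↔ DP H g⁻¹ s₁ := by
        intro g
        constructor
        · intro h
          have h2 : DP H g⁻¹ s₀⁻¹ := dp_inv h
          exact dp_trans h2 ⟨h₁, hh₁, h₂, hh₂, hs₁eq⟩
        · intro h
          have h2 : DP H g⁻¹ s₀⁻¹ := dp_trans h (dp_symm ⟨h₁, hh₁, h₂, hh₂, hs₁eq⟩)
          simpa using dp_inv h2
      have pf2 : ∀ g : G, DP H g s₁ ↔ DP H g⁻¹ s₀ := by
        intro g
        constructor
        · intro h
          have h2 : DP H g s₀⁻¹ := dp_trans h (dp_symm ⟨h₁, hh₁, h₂, hh₂, hs₁eq⟩)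
          simpa using dp_inv h2
        · intro h
          have h2 : DP H g s₀⁻¹ := by simpa using dp_inv h
          exact dp_trans h2 ⟨h₁, hh₁, h₂, hh₂, hs₁eq⟩
      -- decomposition of S' ∩ DC g
      have hdecomp : ∀ g : G, S' ∩ DC H g = ((S ∩ DC H g) \ Cs H s₀) \ Cs H s₁ := by
        intro g
        rw [hS'def, diff_inter, diff_inter]
      -- counting after removal
      have hcnt' : ∀ g : G, DP H g s₀ → DP H g s₁ →
          cnt H (S' ∩ DC H g) + 2 = cnt H (S ∩ DC H g) := by
        intro g hg0 hg1
        rw [hdecomp g]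
        have e1 : cnt H ((S ∩ DC H g) \ Cs H s₀) + 1 = cnt H (S ∩ DC H g) :=
          cnt_diff_coset ⟨hs₀S, hg0⟩
        have hs₁mem : s₁ ∈ (S ∩ DC H g) \ Cs H s₀ := ⟨⟨hs₁S, hg1⟩, hs₁C⟩
        have e2 := cnt_diff_coset (H := H) hs₁mem
        omega
      have hcnt'' : ∀ g : G, ¬ DP H g s₀ → ¬ DP H g s₁ →
          cnt H (S' ∩ DC H g) = cnt H (S ∩ DC H g) ∧ S' ∩ DC H g = S ∩ DC H g := by
        intro g hg0 hg1
        rw [hdecomp g]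
        have e1 : (S ∩ DC H g) \ Cs H s₀ = S ∩ DC H g := coset_disj hg0 S
        rw [e1, coset_disj hg1 S]
        exact ⟨rfl, rfl⟩
      -- mixed cases are impossible for dosets relevant to invariants, but for
      -- balance we handle all four cases symmetrically
      have hbal' : ∀ g : G, cnt H (S' ∩ DC H g) = cnt H (S' ∩ DC H g⁻¹) := by
        intro g
        by_cases hg0 : DP H g s₀ <;> by_cases hg1 : DP H g s₁
        · -- both: then g⁻¹ side also has both
          have hg0' : DP H g⁻¹ s₀ := (pf2 g).1 hg1
          have hg1' : DP H g⁻¹ s₁ := (pf1 g).1 hg0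
          have e1 := hcnt' g hg0 hg1
          have e2 := hcnt' g⁻¹ hg0' hg1'
          have := hbal g
          omega
        · -- s₀ yes, s₁ no: g⁻¹ has s₁ yes s₀ no
          have hg1' : DP H g⁻¹ s₁ := (pf1 g).1 hg0
          have hg0' : ¬ DP H g⁻¹ s₀ := fun h => hg1 ((pf2 g).2 h)
          have e1 : S' ∩ DC H g = (S ∩ DC H g) \ Cs H s₀ := by
            calc S' ∩ DC H g = ((S \ Cs H s₀) ∩ DC H g) \ Cs H s₁ := diff_inter _ _ _
              _ = (S \ Cs H s₀) ∩ DC H g := coset_disj hg1 _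
              _ = (S ∩ DC H g) \ Cs H s₀ := diff_inter _ _ _
          have e2 : S' ∩ DC H g⁻¹ = (S ∩ DC H g⁻¹) \ Cs H s₁ := by
            calc S' ∩ DC H g⁻¹ = ((S \ Cs H s₀) ∩ DC H g⁻¹) \ Cs H s₁ := diff_inter _ _ _
              _ = ((S ∩ DC H g⁻¹) \ Cs H s₀) \ Cs H s₁ := by rw [diff_inter]
              _ = (S ∩ DC H g⁻¹) \ Cs H s₁ := by rw [coset_disj hg0']
          have c1 := cnt_diff_coset (H := H) (X := S ∩ DC H g) (s₀ := s₀) ⟨hs₀S, hg0⟩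
          have c2 := cnt_diff_coset (H := H) (X := S ∩ DC H g⁻¹) (s₀ := s₁) ⟨hs₁S, hg1'⟩
          rw [e1, e2]
          have := hbal g
          omega
        · have hg0' : DP H g⁻¹ s₀ := (pf2 g).1 hg1
          have hg1' : ¬ DP H g⁻¹ s₁ := fun h => hg0 ((pf1 g).2 h)
          have e1 : S' ∩ DC H g = (S ∩ DC H g) \ Cs H s₁ := by
            calc S' ∩ DC H g = ((S \ Cs H s₀) ∩ DC H g) \ Cs H s₁ := diff_inter _ _ _
              _ = ((S ∩ DC H g) \ Cs H s₀) \ Cs H s₁ := by rw [diff_inter]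
              _ = (S ∩ DC H g) \ Cs H s₁ := by rw [coset_disj hg0]
          have e2 : S' ∩ DC H g⁻¹ = (S ∩ DC H g⁻¹) \ Cs H s₀ := by
            calc S' ∩ DC H g⁻¹ = ((S \ Cs H s₀) ∩ DC H g⁻¹) \ Cs H s₁ := diff_inter _ _ _
              _ = (S \ Cs H s₀) ∩ DC H g⁻¹ := coset_disj hg1' _
              _ = (S ∩ DC H g⁻¹) \ Cs H s₀ := diff_inter _ _ _
          have c1 := cnt_diff_coset (H := H) (X := S ∩ DC H g) (s₀ := s₁) ⟨hs₁S, hg1⟩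
          have c2 := cnt_diff_coset (H := H) (X := S ∩ DC H g⁻¹) (s₀ := s₀) ⟨hs₀S, hg0'⟩
          rw [e1, e2]
          have := hbal g
          omega
        · have hg0' : ¬ DP H g⁻¹ s₀ := fun h => hg1 ((pf2 g).2 h)
          have hg1' : ¬ DP H g⁻¹ s₁ := fun h => hg0 ((pf1 g).2 h)
          have e1 := hcnt'' g hg0 hg1
          have e2 := hcnt'' g⁻¹ hg0' hg1'
          rw [e1.1, e2.1]; exact hbal g
      have hpar' : ∀ g : G, DP H g g⁻¹ →
          (cnt H (S' ∩ DC H g) % 2 = cnt H (DC H g) % 2 ∨ S' ∩ DC H g = ∅) := by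
        intro g hgself
        by_cases hg0 : DP H g s₀
        · -- then also s₁ in DC g, two removed, parity preserved
          have hg1' : DP H g⁻¹ s₁ := (pf1 g).1 hg0
          have hg1 : DP H g s₁ := dp_trans hgself hg1'
          have e := hcnt' g hg0 hg1
          rcases hpar g hgself with hp | hp
          · left; omega
          · exfalso; exact (by rw [hp] at e; simp [cnt] at e : False)
        · by_cases hg1 : DP H g s₁
          · exfalso
            have : DP H g⁻¹ s₀ := (pf2 g).1 hg1
            exact hg0 (dp_trans hgself this)
          · rcases hpar g hgself with hp | hp
            · left; rw [(hcnt'' g hg0 hg1).1]; exact hp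
            · right; rw [(hcnt'' g hg0 hg1).2]; exact hp
      obtain ⟨T', hT'sub, hT'inv, hT'tr⟩ := ih S' hcard' hcl' hbal' hpar'
      refine ⟨insert x (insert x⁻¹ T'), ?_, ?_, ?_⟩
      · intro t ht
        rcases ht with rfl | rfl | ht
        · exact hxS
        · exact hxiS
        · exact hS'sub (hT'sub ht)
      · intro t ht
        rcases ht with rfl | rfl | ht
        · exact Set.mem_insert_of_mem _ (Set.mem_insert _ _)
        · simpa using Set.mem_insert _ _
        · exact Set.mem_insert_of_mem _ (Set.mem_insert_of_mem _ (hT'inv t ht))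
      · intro s hsS
        by_cases hsC0 : s₀⁻¹ * s ∈ H
        · -- s is in the coset of s₀, representative x
          refine ⟨x, ⟨Set.mem_insert _ _, ?_⟩, ?_⟩
          · have : s⁻¹ * x = (s₀⁻¹ * s)⁻¹ * (s₀⁻¹ * x) := by group
            rw [this]; exact mul_mem (inv_mem hsC0) hxC
          · rintro t ⟨htT, hts⟩
            rcases htT with rfl | rfl | htT'
            · rfl
            · exfalso
              -- s⁻¹ x⁻¹ ∈ H and s₀⁻¹ s ∈ H gives s₀⁻¹ x⁻¹ ∈ H; with s₁⁻¹x⁻¹ ∈ H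
              -- gives s₀⁻¹ s₁ ∈ H, contradiction
              have h1 : s₀⁻¹ * x⁻¹ ∈ H := mem_Cs_trans hsC0 hts
              have h2 : s₀⁻¹ * s₁ = (s₀⁻¹ * x⁻¹) * (s₁⁻¹ * x⁻¹)⁻¹ := by group
              exact hs₁C (by rw [h2]; exact mul_mem h1 (inv_mem hxiD))
            · exfalso
              have : s₀⁻¹ * t ∈ H := mem_Cs_trans hsC0 hts
              exact (hT'sub htT').1.2 this
        · by_cases hsC1 : s₁⁻¹ * s ∈ H
          · refine ⟨x⁻¹, ⟨Set.mem_insert_of_mem _ (Set.mem_insert _ _), ?_⟩, ?_⟩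
            · have : s⁻¹ * x⁻¹ = (s₁⁻¹ * s)⁻¹ * (s₁⁻¹ * x⁻¹) := by group
              rw [this]; exact mul_mem (inv_mem hsC1) hxiD
            · rintro t ⟨htT, hts⟩
              rcases htT with rfl | rfl | htT'
              · exfalso
                have h1 : s₁⁻¹ * x ∈ H := mem_Cs_trans hsC1 hts
                have h2 : s₀⁻¹ * s₁ = (s₀⁻¹ * x) * (s₁⁻¹ * x)⁻¹ := by group
                exact hs₁C (by rw [h2]; exact mul_mem hxC (inv_mem h1))
              · rfl
              · exfalso
                have : s₁⁻¹ * t ∈ H := mem_Cs_trans hsC1 hts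
                exact (hT'sub htT').2 this
          · have hsS' : s ∈ S' := ⟨⟨hsS, hsC0⟩, hsC1⟩
            obtain ⟨t, ⟨htT', hth⟩, huniq⟩ := hT'tr s hsS'
            refine ⟨t, ⟨Set.mem_insert_of_mem _ (Set.mem_insert_of_mem _ htT'), hth⟩, ?_⟩
            rintro t' ⟨ht'T, ht's⟩
            rcases ht'T with rfl | rfl | ht'T'
            · exfalso
              have : s₀⁻¹ * s = (s⁻¹ * x * (s₀⁻¹ * x)⁻¹)⁻¹ := by group
              exact hsC0 (by rw [this]; exact inv_mem (mul_mem ht's (inv_mem hxC)))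
            · exfalso
              have : s₁⁻¹ * s = (s⁻¹ * x⁻¹ * (s₁⁻¹ * x⁻¹)⁻¹)⁻¹ := by group
              exact hsC1 (by rw [this]; exact inv_mem (mul_mem ht's (inv_mem hxiD)))
            · exact huniq t' ⟨ht'T', ht's⟩
    · -- LONE case: the only coset of S in the doset of s₀⁻¹ is that of s₀
      push_neg at hpair
      -- find an element of S in the doset of s₀⁻¹
      have hs₀self : s₀ ∈ S ∩ DC H s₀ := ⟨hs₀S, dp_self s₀⟩
      have hpos : 0 < cnt H (S ∩ DC H s₀⁻¹) := by
        rw [← hbal s₀]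
        rw [cnt, Set.ncard_pos (Set.toFinite _)]
        exact ⟨QuotientGroup.mk s₀, s₀, hs₀self, rfl⟩
      have hne : (S ∩ DC H s₀⁻¹).Nonempty := by
        by_contra hc
        rw [Set.not_nonempty_iff_eq_empty] at hc
        rw [cnt, hc] at hpos
        simp at hpos
      obtain ⟨s₁, hs₁S, hs₁d⟩ := hne
      have hs₁C : s₀⁻¹ * s₁ ∈ H := hpair s₁ hs₁S hs₁d
      -- the doset of s₀ is inverse-closed
      have hself' : DP H s₀⁻¹ s₀ := dp_coset hs₁d (by simpa [mul_assoc] using inv_mem hs₁C)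
      have hself : DP H s₀ s₀⁻¹ := dp_symm hself'
      -- construct an element x of the coset of s₀ with x⁻¹ in the same coset
      obtain ⟨h₁, hh₁, h₂, hh₂, hs₁eq⟩ := hs₁d
      set x := s₀ * h₁⁻¹ with hxdef
      have hxC : s₀⁻¹ * x ∈ H := by
        simpa [hxdef, mul_assoc] using inv_mem hh₁
      have hxiC : s₀⁻¹ * x⁻¹ ∈ H := by
        have : s₀⁻¹ * x⁻¹ = (s₀⁻¹ * s₁) * h₂⁻¹ := by rw [hs₁eq, hxdef]; group
        rw [this]; exact mul_mem hs₁C (inv_mem hh₂)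
      have hxx : x * x ∈ H := by
        have h1 : (s₀⁻¹ * x)⁻¹ * (s₀⁻¹ * x⁻¹) ∈ H := mul_mem (inv_mem hxC) hxiC
        have h2 : x * x = ((s₀⁻¹ * x)⁻¹ * (s₀⁻¹ * x⁻¹))⁻¹ := by
          simp [mul_assoc, mul_inv_rev]
        rw [h2]; exact inv_mem h1
      -- all of S ∩ DC s₀ lies in the coset of s₀
      have hallC : ∀ u ∈ S ∩ DC H s₀, s₀⁻¹ * u ∈ H := by
        rintro u ⟨huS, hud⟩
        exact hpair u huS (dp_trans hself' hud)
      have hcnt1 : cnt H (S ∩ DC H s₀) = 1 := cnt_one hs₀self hallC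
      have hodd : Odd (cnt H (DC H s₀)) := by
        rcases hpar s₀ hself with hp | hp
        · rw [hcnt1] at hp; rw [Nat.odd_iff]; omega
        · exfalso; rw [hp] at hcnt1; simp [cnt] at hcnt1
      have hDCx : DC H x = DC H s₀ := by
        have hx0 : DP H s₀ x := dp_coset (dp_self s₀) hxC
        ext y
        exact (dp_congr hx0 y).symm
      obtain ⟨w, hw1, hw2⟩ := hcrit x hxx (by rwa [hDCx])
      have hwC : s₀⁻¹ * w ∈ H := mem_Cs_trans hxC hw2
      have hwS : w ∈ S := hCsS s₀ hs₀S hwC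
      have hwinv : w⁻¹ = w := inv_eq_of_mul_eq_one_right hw1
      -- recurse on S minus the coset of s₀
      set S' := S \ Cs H s₀ with hS'def
      have hS'sub : S' ⊆ S := fun y hy => hy.1
      have hs₀C : s₀⁻¹ * s₀ ∈ H := by simpa using one_mem H
      have hs₀notS' : s₀ ∉ S' := fun h => h.2 hs₀C
      have hcard' : S'.ncard ≤ n := by
        have : S'.ncard < S.ncard :=
          Set.ncard_lt_ncard ⟨hS'sub, fun hSS => hs₀notS' (hSS hs₀S)⟩ (Set.toFinite _)
        omega
      have hcl' : ∀ s ∈ S', ∀ h ∈ H, s * h ∈ S' := by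
        rintro s ⟨hsS, hs0⟩ h hh
        refine ⟨hcl s hsS h hh, fun hc => hs0 ?_⟩
        have hc' : s₀⁻¹ * (s * h) ∈ H := hc
        have := mul_mem hc' (inv_mem hh); exact (by simpa [mul_assoc] using this : s₀⁻¹ * s ∈ H)
      have hbal' : ∀ g : G, cnt H (S' ∩ DC H g) = cnt H (S' ∩ DC H g⁻¹) := by
        intro g
        by_cases hg0 : DP H g s₀
        · have hg0' : DP H g⁻¹ s₀ := dp_trans (dp_inv hg0) hself'
          have e1 : S' ∩ DC H g = (S ∩ DC H g) \ Cs H s₀ := diff_inter _ _ _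
          have e2 : S' ∩ DC H g⁻¹ = (S ∩ DC H g⁻¹) \ Cs H s₀ := diff_inter _ _ _
          have c1 := cnt_diff_coset (H := H) (X := S ∩ DC H g) (s₀ := s₀) ⟨hs₀S, hg0⟩
          have c2 := cnt_diff_coset (H := H) (X := S ∩ DC H g⁻¹) (s₀ := s₀) ⟨hs₀S, hg0'⟩
          rw [e1, e2]
          have := hbal g
          omega
        · have hg0' : ¬ DP H g⁻¹ s₀ := by
            intro h
            exact hg0 (by simpa using dp_inv (dp_trans h hself))
          have e1 : S' ∩ DC H g = S ∩ DC H g := by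
            rw [hS'def, diff_inter, coset_disj hg0]
          have e2 : S' ∩ DC H g⁻¹ = S ∩ DC H g⁻¹ := by
            rw [hS'def, diff_inter, coset_disj hg0']
          rw [e1, e2]; exact hbal g
      have hpar' : ∀ g : G, DP H g g⁻¹ →
          (cnt H (S' ∩ DC H g) % 2 = cnt H (DC H g) % 2 ∨ S' ∩ DC H g = ∅) := by
        intro g hgself
        by_cases hg0 : DP H g s₀
        · right
          have e1 : S' ∩ DC H g = (S ∩ DC H g) \ Cs H s₀ := diff_inter _ _ _
          rw [e1]
          have hDCg : DC H g = DC H s₀ := by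
            ext y; exact (dp_congr hg0 y)
          rw [hDCg]
          ext u
          simp only [Set.mem_diff, Set.mem_empty_iff_false, iff_false, not_and, Set.mem_inter_iff]
          intro hu
          exact fun hn => hn (hallC u hu)
        · have e1 : S' ∩ DC H g = S ∩ DC H g := by
            rw [hS'def, diff_inter, coset_disj hg0]
          rw [e1]; exact hpar g hgself
      obtain ⟨T', hT'sub, hT'inv, hT'tr⟩ := ih S' hcard' hcl' hbal' hpar'
      refine ⟨insert w T', ?_, ?_, ?_⟩
      · intro t ht
        rcases ht with rfl | ht
        · exact hwS
        · exact hS'sub (hT'sub ht)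
      · intro t ht
        rcases ht with rfl | ht
        · rw [hwinv]; exact Set.mem_insert _ _
        · exact Set.mem_insert_of_mem _ (hT'inv t ht)
      · intro s hsS
        by_cases hsC0 : s₀⁻¹ * s ∈ H
        · refine ⟨w, ⟨Set.mem_insert _ _, ?_⟩, ?_⟩
          · have : s⁻¹ * w = (s₀⁻¹ * s)⁻¹ * (s₀⁻¹ * w) := by group
            rw [this]; exact mul_mem (inv_mem hsC0) hwC
          · rintro t ⟨htT, hts⟩
            rcases htT with rfl | htT'
            · rfl
            · exfalso
              have : s₀⁻¹ * t ∈ H := mem_Cs_trans hsC0 hts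
              exact (hT'sub htT').2 this
        · have hsS' : s ∈ S' := ⟨hsS, hsC0⟩
          obtain ⟨t, ⟨htT', hth⟩, huniq⟩ := hT'tr s hsS'
          refine ⟨t, ⟨Set.mem_insert_of_mem _ htT', hth⟩, ?_⟩
          rintro t' ⟨ht'T, ht's⟩
          rcases ht'T with rfl | ht'T'
          · exfalso
            have : s₀⁻¹ * s = (s⁻¹ * t' * (s₀⁻¹ * t')⁻¹)⁻¹ := by group
            exact hsC0 (by rw [this]; exact inv_mem (mul_mem ht's (inv_mem hwC)))
          · exact huniq t' ⟨ht'T', ht's⟩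

lemma dc_closed (g : G) : ∀ s ∈ DC H g, ∀ h ∈ H, s * h ∈ DC H g := by
  intro s hs h hh
  exact dp_coset hs (by simpa [mul_assoc] using hh)

lemma cnt_dc_inv (g : G) : cnt H (DC H g) = cnt H (DC H g⁻¹) := by
  have h1 := cnt_mul_card (H := H) (dc_closed g)
  have h2 := cnt_mul_card (H := H) (dc_closed g⁻¹)
  have himg : (fun u : G => u⁻¹) '' DC H g = DC H g⁻¹ := by
    ext v
    constructor
    · rintro ⟨u, hu, rfl⟩
      exact dp_inv hu
    · intro hv
      exact ⟨v⁻¹, (by simpa using dp_inv hv : DP H g v⁻¹), inv_inv v⟩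
  have hcard : (DC H g).ncard = (DC H g⁻¹).ncard := by
    rw [← himg]
    exact (Set.ncard_image_of_injective _ inv_injective).symm
  have hHpos : 0 < Nat.card H := Nat.card_pos
  have : cnt H (DC H g) * Nat.card H = cnt H (DC H g⁻¹) * Nat.card H := by
    rw [h1, h2, hcard]
  exact Nat.eq_of_mul_eq_mul_right hHpos this

theorem suff (hcrit : CritCount H) : IsPerfectCode H := by
  set S₀ : Set G := {x | x ∉ H} with hS₀def
  have hcl : ∀ s ∈ S₀, ∀ h ∈ H, s * h ∈ S₀ := by
    intro s hs h hh hc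
    exact hs (by simpa using mul_mem (hc : s * h ∈ H) (inv_mem hh))
  have hsplit : ∀ g : G, (g ∈ H → S₀ ∩ DC H g = ∅) ∧ (g ∉ H → S₀ ∩ DC H g = DC H g) := by
    intro g
    constructor
    · intro hg
      ext u
      simp only [Set.mem_inter_iff, Set.mem_empty_iff_false, iff_false, not_and]
      rintro hu ⟨h₁, hh₁, h₂, hh₂, rfl⟩
      exact hu (mul_mem (mul_mem hh₁ hg) hh₂)
    · intro hg
      ext u
      simp only [Set.mem_inter_iff, and_iff_right_iff_imp]
      rintro ⟨h₁, hh₁, h₂, hh₂, rfl⟩ hc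
      exact hg (by simpa [mul_assoc] using mul_mem (mul_mem (inv_mem hh₁) (hc : h₁ * g * h₂ ∈ H)) (inv_mem hh₂))
  have hbal : ∀ g : G, cnt H (S₀ ∩ DC H g) = cnt H (S₀ ∩ DC H g⁻¹) := by
    intro g
    by_cases hg : g ∈ H
    · rw [(hsplit g).1 hg, (hsplit g⁻¹).1 (inv_mem hg)]
    · rw [(hsplit g).2 hg, (hsplit g⁻¹).2 (fun hc => hg (by simpa using inv_mem hc))]
      exact cnt_dc_inv g
  have hpar : ∀ g : G, DP H g g⁻¹ →
      (cnt H (S₀ ∩ DC H g) % 2 = cnt H (DC H g) % 2 ∨ S₀ ∩ DC H g = ∅) := by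
    intro g _
    by_cases hg : g ∈ H
    · right; exact (hsplit g).1 hg
    · left; rw [(hsplit g).2 hg]
  obtain ⟨T', hT'sub, hT'inv, hT'tr⟩ :=
    key_ind hcrit S₀.ncard S₀ le_rfl hcl hbal hpar
  refine ⟨insert 1 T', Set.mem_insert _ _, ?_, ?_⟩
  · ext u
    have hfwd : ∀ v, v ∈ insert 1 T' → v⁻¹ ∈ insert 1 T' := by
      intro v hv
      rcases hv with rfl | hv
      · simp
      · exact Set.mem_insert_of_mem _ (hT'inv v hv)
    constructor
    · intro hu
      have : u⁻¹ ∈ insert 1 T' := hu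
      simpa using hfwd _ this
    · intro hu
      exact hfwd u hu
  · intro g
    by_cases hg : g ∈ H
    · refine ⟨1, ⟨Set.mem_insert _ _, by simpa using inv_mem hg⟩, ?_⟩
      rintro t ⟨htT, hts⟩
      rcases htT with rfl | htT'
      · rfl
      · exfalso
        exact (hT'sub htT') (by simpa using mul_mem hg hts)
    · obtain ⟨t, ⟨htT', hth⟩, huniq⟩ := hT'tr g hg
      refine ⟨t, ⟨Set.mem_insert_of_mem _ htT', hth⟩, ?_⟩
      rintro t' ⟨ht'T, ht's⟩
      rcases ht'T with rfl | ht'T'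
      · exfalso; exact hg (by simpa using inv_mem (by simpa using ht's : g⁻¹ ∈ H))
      · exact huniq t' ⟨ht'T', ht's⟩

/-- Necessity of the criterion, in the special normalizing form. -/
theorem nec_norm {J : Subgroup G} (hpc : IsPerfectCode J) (z : G)
    (hz2 : z * z ∈ J) (hnorm : ∀ p ∈ J, z⁻¹ * p * z ∈ J) :
    ∃ x : G, x * x = 1 ∧ z⁻¹ * x ∈ J := by
  obtain ⟨T, h1T, hTinv, hTtr⟩ := hpc
  obtain ⟨t, ⟨htT, htz⟩, huniq⟩ := hTtr z
  have htiT : t⁻¹ ∈ T := by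
    rw [← hTinv]
    simpa using htT
  have htiz : z⁻¹ * t⁻¹ ∈ J := by
    have hp : z⁻¹ * (z⁻¹ * t)⁻¹ * z ∈ J := hnorm _ (inv_mem htz)
    have he : z⁻¹ * t⁻¹ = (z⁻¹ * (z⁻¹ * t)⁻¹ * z) * (z * z)⁻¹ := by group
    rw [he]
    exact mul_mem hp (inv_mem hz2)
  have : t⁻¹ = t := huniq t⁻¹ ⟨htiT, htiz⟩
  exact ⟨t, mul_eq_one_iff_inv_eq.2 this, htz⟩


/-- The subgroup `H ∩ gHg⁻¹`. -/
def Kg (H : Subgroup G) (g : G) : Subgroup G where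
  carrier := {x | x ∈ H ∧ g⁻¹ * x * g ∈ H}
  mul_mem' := by
    rintro a b ⟨ha1, ha2⟩ ⟨hb1, hb2⟩
    refine ⟨mul_mem ha1 hb1, ?_⟩
    have : g⁻¹ * (a * b) * g = (g⁻¹ * a * g) * (g⁻¹ * b * g) := by group
    rw [this]; exact mul_mem ha2 hb2
  one_mem' := ⟨one_mem _, by simpa using one_mem H⟩
  inv_mem' := by
    rintro a ⟨h1, h2⟩
    refine ⟨inv_mem h1, ?_⟩
    have : g⁻¹ * a⁻¹ * g = (g⁻¹ * a * g)⁻¹ := by group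
    rw [this]; exact inv_mem h2

lemma Kg_le (g : G) : Kg H g ≤ H := fun _ hx => hx.1

lemma bridge (g : G) : Nat.card H = Nat.card (Kg H g) * cnt H (DC H g) := by
  classical
  have hclK : ∀ s ∈ (H : Set G), ∀ h ∈ Kg H g, s * h ∈ (H : Set G) := by
    intro s hs h hh
    exact mul_mem hs hh.1
  have h1 := cnt_mul_card (H := Kg H g) (X := (H : Set G)) hclK
  -- identify the two coset counts
  have houtH : ∀ q : G ⧸ Kg H g, q ∈ (QuotientGroup.mk '' (H : Set G) : Set (G ⧸ Kg H g)) →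
      Quotient.out q ∈ H := by
    rintro q ⟨h, hh, rfl⟩
    have : (QuotientGroup.mk (Quotient.out (QuotientGroup.mk h : G ⧸ Kg H g)) : G ⧸ Kg H g)
        = QuotientGroup.mk h := QuotientGroup.out_eq' _
    have hmem : h⁻¹ * Quotient.out (QuotientGroup.mk h : G ⧸ Kg H g) ∈ Kg H g :=
      (QuotientGroup.eq).1 this.symm
    have := mul_mem (hh : h ∈ H) hmem.1
    simpa [mul_assoc] using this
  have ecnt : cnt (Kg H g) (H : Set G) = cnt H (DC H g) := by
    rw [cnt, cnt, ← Nat.card_coe_set_eq, ← Nat.card_coe_set_eq]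
    apply Nat.card_congr
    refine Equiv.ofBijective (fun q => ⟨QuotientGroup.mk (Quotient.out q.1 * g),
      ⟨Quotient.out q.1 * g, ⟨Quotient.out q.1, houtH q.1 q.2, 1, one_mem _, by group⟩, rfl⟩⟩) ⟨?_, ?_⟩
    · rintro ⟨q, hq⟩ ⟨q', hq'⟩ heq
      simp only [Subtype.mk.injEq] at heq
      have hrel : (Quotient.out q * g)⁻¹ * (Quotient.out q' * g) ∈ H :=
        (QuotientGroup.eq).1 (congrArg Subtype.val heq)
      have hH : (Quotient.out q)⁻¹ * Quotient.out q' ∈ H :=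
        mul_mem (inv_mem (houtH q hq)) (houtH q' hq')
      have hK : (Quotient.out q)⁻¹ * Quotient.out q' ∈ Kg H g := by
        refine ⟨hH, ?_⟩
        have : g⁻¹ * ((Quotient.out q)⁻¹ * Quotient.out q') * g
            = (Quotient.out q * g)⁻¹ * (Quotient.out q' * g) := by group
        rw [this]; exact hrel
      apply Subtype.ext
      calc q = QuotientGroup.mk (Quotient.out q) := (QuotientGroup.out_eq' _).symm
        _ = QuotientGroup.mk (Quotient.out q') := (QuotientGroup.eq).2 hK
        _ = q' := QuotientGroup.out_eq' _
    · rintro ⟨r, hr⟩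
      obtain ⟨u, ⟨h₁, hh₁, h₂, hh₂, rfl⟩, rfl⟩ := hr
      refine ⟨⟨QuotientGroup.mk h₁, ⟨h₁, hh₁, rfl⟩⟩, ?_⟩
      apply Subtype.ext
      simp only []
      apply (QuotientGroup.eq).2
      set q : G ⧸ Kg H g := QuotientGroup.mk h₁ with hqdef
      have hmem : h₁⁻¹ * Quotient.out q ∈ Kg H g := by
        apply (QuotientGroup.eq).1
        rw [hqdef, QuotientGroup.out_eq']
      set k := h₁⁻¹ * Quotient.out q with hkdef
      have houtq : Quotient.out q = h₁ * k := by rw [hkdef]; group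
      have : (Quotient.out q * g)⁻¹ * (h₁ * g * h₂) = (g⁻¹ * k * g)⁻¹ * h₂ := by
        rw [houtq]; group
      rw [this]
      exact mul_mem (inv_mem hmem.2) hh₂
  have hHcard : Nat.card ↥H = (H : Set G).ncard := Nat.card_coe_set_eq _
  rw [hHcard, ← h1, ← ecnt, Nat.mul_comm]

theorem crit_of_sylow (P : Sylow 2 ↥H)
    (hP : IsPerfectCode ((P : Subgroup ↥H).map H.subtype)) : CritCount H := by
  intro g hg2 hodd
  by_cases hgH : g ∈ H
  · exact ⟨1, by simp, by simpa using inv_mem hgH⟩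
  classical
  set K : Subgroup G := Kg H g with hKdef
  have hKH : K ≤ H := Kg_le g
  have hg2K : g * g ∈ K := by
    refine ⟨hg2, ?_⟩
    have : g⁻¹ * (g * g) * g = g * g := by group
    rw [this]; exact hg2
  have hgnotK : g ∉ K := fun h => hgH h.1
  -- conjugation by g and g⁻¹ preserves K
  have hKconjg : ∀ v ∈ K, g⁻¹ * v * g ∈ K := by
    rintro v ⟨hv1, hv2⟩
    refine ⟨hv2, ?_⟩
    have : g⁻¹ * (g⁻¹ * v * g) * g = (g * g)⁻¹ * v * (g * g) := by group
    rw [this]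
    exact mul_mem (mul_mem (inv_mem hg2) hv1) hg2
  have hKconjg' : ∀ v ∈ K, g * v * g⁻¹ ∈ K := by
    rintro v ⟨hv1, hv2⟩
    have h1 : g * v * g⁻¹ ∈ H := by
      have : g * v * g⁻¹ = (g * g) * (g⁻¹ * v * g) * (g * g)⁻¹ := by group
      rw [this]
      exact mul_mem (mul_mem hg2 hv2) (inv_mem hg2)
    refine ⟨h1, ?_⟩
    have : g⁻¹ * (g * v * g⁻¹) * g = v := by group
    rw [this]; exact hv1
  -- the subgroup L = K ∪ Kg
  set L : Subgroup G :=
    { carrier := {x | x ∈ K ∨ x * g⁻¹ ∈ K}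
      one_mem' := Or.inl (one_mem K)
      mul_mem' := by
        rintro a b (ha | ha) (hb | hb)
        · exact Or.inl (mul_mem ha hb)
        · refine Or.inr ?_
          have : a * b * g⁻¹ = a * (b * g⁻¹) := by group
          rw [this]; exact mul_mem ha hb
        · refine Or.inr ?_
          have : a * b * g⁻¹ = (a * g⁻¹) * (g * b * g⁻¹) := by group
          rw [this]; exact mul_mem ha (hKconjg' b hb)
        · refine Or.inl ?_
          have : a * b = (a * g⁻¹) * (g * (b * g⁻¹) * g⁻¹) * (g * g) := by group
          rw [this]
          exact mul_mem (mul_mem ha (hKconjg' _ hb)) hg2K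
      inv_mem' := by
        rintro a (ha | ha)
        · exact Or.inl (inv_mem ha)
        · refine Or.inr ?_
          have : a⁻¹ * g⁻¹ = (g⁻¹ * (a * g⁻¹)⁻¹ * g) * (g * g)⁻¹ := by group
          rw [this]
          exact mul_mem (hKconjg _ (inv_mem ha)) (inv_mem hg2K) } with hLdef
  have hgL : g ∈ L := Or.inr (by simpa using one_mem K)
  have hKL : K ≤ L := fun v hv => Or.inl hv
  have hKnormal : ∀ v ∈ K, ∀ w, w ∈ L → w⁻¹ * v * w ∈ K := by
    rintro v hv w (hw | hw)
    · have h1 : w⁻¹ * v * w = w⁻¹ * v * w := rfl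
      exact mul_mem (mul_mem (inv_mem hw) hv) hw
    · have : w⁻¹ * v * w = g⁻¹ * ((w * g⁻¹)⁻¹ * v * (w * g⁻¹)) * g := by group
      rw [this]
      exact hKconjg _ (mul_mem (mul_mem (inv_mem hw) hv) hw)
  -- the 2-element z = g ^ m, where m is the odd part of the order of g
  set n := orderOf g with hndef
  have hn0 : n ≠ 0 := (orderOf_pos g).ne'
  set m := ordCompl[2] n with hmdef
  have hm0 : m ≠ 0 := (Nat.ordCompl_pos 2 hn0).ne'
  have hmodd : ¬ 2 ∣ m := Nat.not_dvd_ordCompl Nat.prime_two hn0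
  set z := g ^ m with hzdef
  have hzL : z ∈ L := pow_mem hgL m
  have hziH : g⁻¹ * z ∈ H := by
    obtain ⟨j, hj⟩ : ∃ j, m = 2 * j + 1 := ⟨m / 2, by omega⟩
    have : g⁻¹ * z = (g * g) ^ j := by
      rw [hzdef, hj, pow_succ']
      rw [inv_mul_cancel_left, pow_mul]
      congr 1
      exact pow_two g
    rw [this]
    exact pow_mem hg2 j
  have hz2K : z * z ∈ K := by
    have : z * z = (g * g) ^ m := by
      rw [hzdef, ← pow_add, ← pow_two, ← pow_mul, Nat.mul_comm, pow_mul, pow_two, pow_add]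
    rw [this]
    exact pow_mem hg2K m
  -- order of z is a power of 2
  have horderz : orderOf z = 2 ^ n.factorization 2 := by
    rw [hzdef, orderOf_pow, ← hndef]
    have hgcd : Nat.gcd n m = m := Nat.gcd_eq_right (Nat.ordCompl_dvd n 2)
    rw [hgcd, hmdef]
    exact Nat.div_eq_of_eq_mul_left (Nat.pos_of_ne_zero hm0)
      (Nat.ordProj_mul_ordCompl_eq_self n 2).symm
  set zL : ↥L := ⟨z, hzL⟩ with hzLdef
  have horderzL : orderOf zL = 2 ^ n.factorization 2 := by
    rw [← horderz]
    exact (orderOf_injective L.subtype Subtype.coe_injective zL).symm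
  have hzp : IsPGroup 2 (Subgroup.zpowers zL) := by
    apply IsPGroup.of_card (n := n.factorization 2)
    rw [Nat.card_zpowers, horderzL]
  obtain ⟨Q, hQle⟩ := hzp.exists_le_sylow
  have hzQ : zL ∈ Q := hQle (Subgroup.mem_zpowers zL)
  set K' : Subgroup ↥L := K.subgroupOf L with hK'def
  set P₀ : Subgroup G := (Q.toSubgroup ⊓ K').map L.subtype with hP₀def
  have hP₀K : P₀ ≤ K := by
    rintro x ⟨u, hu, rfl⟩
    exact (Subgroup.mem_subgroupOf).1 ((Subgroup.mem_inf).1 hu).2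
  have hP₀H : P₀ ≤ H := le_trans hP₀K hKH
  have hz2P₀ : z * z ∈ P₀ := by
    refine ⟨zL * zL, (Subgroup.mem_inf).2 ⟨mul_mem hzQ hzQ, (Subgroup.mem_subgroupOf).2 ?_⟩, rfl⟩
    exact hz2K
  have hznormP₀ : ∀ p ∈ P₀, z⁻¹ * p * z ∈ P₀ := by
    rintro p ⟨u, hu, rfl⟩
    obtain ⟨huQ, huK'⟩ := (Subgroup.mem_inf).1 hu
    refine ⟨zL⁻¹ * u * zL, (Subgroup.mem_inf).2 ⟨mul_mem (mul_mem (inv_mem hzQ) huQ) hzQ,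
      (Subgroup.mem_subgroupOf).2 ?_⟩, rfl⟩
    exact hKnormal _ ((Subgroup.mem_subgroupOf).1 huK') z hzL
  -- cardinalities
  have hKpos : 0 < Nat.card ↥K := Nat.card_pos
  have hcardL : Nat.card ↥L = 2 * Nat.card ↥K := by
    have hsetL : (L : Set G) = (K : Set G) ∪ (fun k => k * g) '' (K : Set G) := by
      ext x
      constructor
      · rintro (hx | hx)
        · exact Or.inl hx
        · exact Or.inr ⟨x * g⁻¹, hx, by group⟩
      · rintro (hx | ⟨k, hk, rfl⟩)
        · exact Or.inl hx
        · exact Or.inr (by simpa using hk)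
    have hdisj : Disjoint (K : Set G) ((fun k => k * g) '' (K : Set G)) := by
      rw [Set.disjoint_left]
      rintro x hx ⟨k, hk, rfl⟩
      exact hgnotK (by simpa using mul_mem (inv_mem hk) (hx : k * g ∈ K))
    have hinj : Function.Injective (fun k : G => k * g) := fun a b hab => by
      simpa using mul_right_cancel (hab : a * g = b * g)
    have h1 : Nat.card ↥L = (L : Set G).ncard := Nat.card_coe_set_eq _
    have h2 : Nat.card ↥K = (K : Set G).ncard := Nat.card_coe_set_eq _
    rw [h1, h2, hsetL, Set.ncard_union_eq hdisj (Set.toFinite _) (Set.toFinite _),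
      Set.ncard_image_of_injective _ hinj]
    omega
  have hQcard : Nat.card ↥Q.toSubgroup = 2 ^ ((Nat.card ↥L).factorization 2) :=
    Sylow.card_eq_multiplicity Q
  have hK'card : Nat.card ↥K' = Nat.card ↥K :=
    Nat.card_congr (Subgroup.subgroupOfEquivOfLe hKL).toEquiv
  have hK'index : K'.index = 2 := by
    have h1 : Nat.card ↥L = Nat.card (↥L ⧸ K') * Nat.card ↥K' :=
      Subgroup.card_eq_card_quotient_mul_card_subgroup K'
    have h2 : K'.index = Nat.card (↥L ⧸ K') := Subgroup.index_eq_card K'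
    rw [hK'card] at h1
    rw [hcardL] at h1
    have : Nat.card (↥L ⧸ K') = 2 := by
      have := hKpos
      exact Nat.eq_of_mul_eq_mul_right hKpos (by omega)
    omega
  -- card of P₀
  have hrel : K'.relIndex Q.toSubgroup ≤ 2 := by
    have h1 : K'.relIndex Q.toSubgroup ≤ K'.relIndex ⊤ := by
      apply Subgroup.relIndex_le_of_le_right le_top
      rw [Subgroup.relIndex_top_right]
      exact Subgroup.index_ne_zero_of_finite
    rwa [Subgroup.relIndex_top_right, hK'index] at h1
  have hP₀card : Nat.card ↥P₀ = Nat.card ↥(Q.toSubgroup ⊓ K' : Subgroup ↥L) :=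
    (Nat.card_congr ((Q.toSubgroup ⊓ K').equivMapOfInjective L.subtype
      Subtype.coe_injective).toEquiv).symm
  have hQdecomp : Nat.card ↥Q.toSubgroup =
      K'.relIndex Q.toSubgroup * Nat.card ↥(Q.toSubgroup ⊓ K' : Subgroup ↥L) := by
    have h1 : Nat.card ↥Q.toSubgroup =
        Nat.card (↥Q.toSubgroup ⧸ (K'.subgroupOf Q.toSubgroup)) *
          Nat.card ↥(K'.subgroupOf Q.toSubgroup) :=
      Subgroup.card_eq_card_quotient_mul_card_subgroup _
    have h2 : K'.relIndex Q.toSubgroup =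
        Nat.card (↥Q.toSubgroup ⧸ (K'.subgroupOf Q.toSubgroup)) :=
      Subgroup.index_eq_card _
    have h3 : K'.subgroupOf Q.toSubgroup = (Q.toSubgroup ⊓ K').subgroupOf Q.toSubgroup := by
      ext u
      simp [Subgroup.mem_subgroupOf]
    have h4 : Nat.card ↥(K'.subgroupOf Q.toSubgroup) =
        Nat.card ↥(Q.toSubgroup ⊓ K' : Subgroup ↥L) := by
      rw [h3]
      exact Nat.card_congr (Subgroup.subgroupOfEquivOfLe inf_le_left).toEquiv
    rw [h1, ← h2, h4]
  -- conclude : card P₀ = 2-part of card H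
  have hKcard0 : Nat.card ↥K ≠ 0 := hKpos.ne'
  set v := (Nat.card ↥K).factorization 2 with hvdef
  have hfactL : (Nat.card ↥L).factorization 2 = 1 + v := by
    rw [hcardL, Nat.factorization_mul (by norm_num) hKcard0]
    simp [Nat.Prime.factorization Nat.prime_two, hvdef]
  set r := K'.relIndex Q.toSubgroup with hrdef
  set c := Nat.card ↥(Q.toSubgroup ⊓ K' : Subgroup ↥L) with hcdef
  have hQc : 2 * 2 ^ v = r * c := by
    rw [← hQdecomp, hQcard, hfactL, pow_add, pow_one]
  have hcdvdK : c ∣ Nat.card ↥K := by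
    have := Subgroup.card_dvd_of_le hP₀K
    rwa [hP₀card] at this
  have hcpow : ∃ k ≤ 1 + v, c = 2 ^ k := by
    refine (Nat.dvd_prime_pow Nat.prime_two).1 ?_
    refine ⟨r, ?_⟩
    rw [pow_add, pow_one, hQc]
    exact Nat.mul_comm r c
  obtain ⟨k, hk1, hkc⟩ := hcpow
  have hkv : k ≤ v := by
    apply (Nat.Prime.pow_dvd_iff_le_factorization Nat.prime_two hKcard0).1
    rw [← hkc]
    exact hcdvdK
  have hcle : c ≤ 2 ^ v := by
    rw [hkc]
    exact Nat.pow_le_pow_right (by norm_num) hkv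
  have hceq : c = 2 ^ v := by
    have h1 : r * c ≤ 2 * c := Nat.mul_le_mul_right c hrel
    omega
  have hHcard0 : Nat.card ↥H ≠ 0 := Nat.card_pos.ne'
  have hfactH : (Nat.card ↥H).factorization 2 = v := by
    have hbr := bridge (H := H) g
    have hcnt0 : cnt H (DC H g) ≠ 0 := by
      rcases hodd with ⟨t, ht⟩; omega
    have hnd : ¬ 2 ∣ cnt H (DC H g) := by
      rcases hodd with ⟨t, ht⟩; omega
    rw [hbr, Nat.factorization_mul hKcard0 hcnt0]
    simp [Nat.factorization_eq_zero_of_not_dvd hnd, hvdef]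
  have hP₀cardfin : Nat.card ↥P₀ = 2 ^ ((Nat.card ↥H).factorization 2) := by
    rw [hP₀card, hceq, hfactH]
  -- make P₀ into a Sylow subgroup of H and conjugate it to P
  set P₀' : Subgroup ↥H := P₀.subgroupOf H with hP₀'def
  have hP₀'card : Nat.card ↥P₀' = 2 ^ ((Nat.card ↥H).factorization 2) := by
    rw [← hP₀cardfin]
    exact Nat.card_congr (Subgroup.subgroupOfEquivOfLe hP₀H).toEquiv
  set S₀ : Sylow 2 ↥H := Sylow.ofCard P₀' hP₀'card with hS₀def
  obtain ⟨h, hh⟩ := MulAction.exists_smul_eq (↥H) S₀ P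
  have hmem : ∀ x : ↥H, x ∈ (P : Subgroup ↥H) ↔ h⁻¹ * x * h ∈ P₀' := by
    intro x
    have h1 : (P : Subgroup ↥H) = MulAut.conj h • (S₀ : Subgroup ↥H) := by
      rw [← hh]
      exact Sylow.coe_subgroup_smul
    rw [h1, Subgroup.mem_pointwise_smul_iff_inv_smul_mem]
    have h2 : (MulAut.conj h)⁻¹ • x = h⁻¹ * x * h := by
      rw [← map_inv, MulAut.smul_def, MulAut.conj_apply, inv_inv]
    rw [h2]
    exact Iff.rfl
  -- transfer z to the conjugate side
  set hG : G := (h : G) with hGdef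
  have hGH : hG ∈ H := h.2
  set z' : G := hG * z * hG⁻¹ with hz'def
  set PG : Subgroup G := (P : Subgroup ↥H).map H.subtype with hPGdef
  have hz'2 : z' * z' ∈ PG := by
    set u : ↥H := ⟨z * z, hP₀H hz2P₀⟩ with hudef
    have huP₀' : u ∈ P₀' := by
      rw [hP₀'def, Subgroup.mem_subgroupOf]
      exact hz2P₀
    have hyP : h * u * h⁻¹ ∈ (P : Subgroup ↥H) := by
      rw [hmem]
      have : h⁻¹ * (h * u * h⁻¹) * h = u := by group
      rw [this]
      exact huP₀'
    refine ⟨h * u * h⁻¹, hyP, ?_⟩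
    show ((h * u * h⁻¹ : ↥H) : G) = z' * z'
    show (h : G) * (z * z) * (h : G)⁻¹ = z' * z'
    rw [hz'def, hGdef]
    group
  have hz'norm : ∀ p ∈ PG, z'⁻¹ * p * z' ∈ PG := by
    rintro p ⟨y, hyP, rfl⟩
    have hv : h⁻¹ * y * h ∈ P₀' := (hmem y).1 hyP
    have hvP₀ : ((h⁻¹ * y * h : ↥H) : G) ∈ P₀ := (Subgroup.mem_subgroupOf).1 hv
    have hw : z⁻¹ * ((h⁻¹ * y * h : ↥H) : G) * z ∈ P₀ := hznormP₀ _ hvP₀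
    set wH : ↥H := ⟨z⁻¹ * ((h⁻¹ * y * h : ↥H) : G) * z, hP₀H hw⟩ with hwHdef
    have hwP₀' : wH ∈ P₀' := by
      rw [hP₀'def, Subgroup.mem_subgroupOf]
      exact hw
    have hy'P : h * wH * h⁻¹ ∈ (P : Subgroup ↥H) := by
      rw [hmem]
      have : h⁻¹ * (h * wH * h⁻¹) * h = wH := by group
      rw [this]
      exact hwP₀'
    refine ⟨h * wH * h⁻¹, hy'P, ?_⟩
    show ((h * wH * h⁻¹ : ↥H) : G) = z'⁻¹ * ((y : ↥H) : G) * z'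
    show (h : G) * (z⁻¹ * ((h : G)⁻¹ * (y : G) * (h : G)) * z) * (h : G)⁻¹
      = z'⁻¹ * (y : G) * z'
    rw [hz'def, hGdef]
    group
  obtain ⟨x, hx1, hx2⟩ := nec_norm hP z' hz'2 hz'norm
  have hpH : z'⁻¹ * x ∈ H := Subgroup.map_subtype_le _ hx2
  refine ⟨hG⁻¹ * x * hG, ?_, ?_⟩
  · have he : (hG⁻¹ * x * hG) * (hG⁻¹ * x * hG) = hG⁻¹ * (x * x) * hG := by group
    rw [he, hx1]
    group
  · have he : g⁻¹ * (hG⁻¹ * x * hG) =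
        (g⁻¹ * z) * (hG⁻¹ * ((hG * z * hG⁻¹)⁻¹ * x) * hG) := by group
    rw [he]
    refine mul_mem hziH (mul_mem (mul_mem (inv_mem hGH) ?_) hGH)
    rw [← hz'def]
    exact hpH

end Fin
end PCaux

theorem perfect_code_of_sylow_two {G : Type*} [Group G] [Finite G]
    (H : Subgroup G) (P : Sylow 2 H)
    (hP : IsPerfectCode ((P : Subgroup H).map H.subtype)) :
    IsPerfectCode H :=
  PCaux.suff (PCaux.crit_of_sylow P hP)
end

section
/- Let G = SL(2,3) be the special linear group of degree 2 over the field with 3 elements, and let H be a cyclic subgroup of G of order 6. Then H is not a perfect code of G, even though H equals its own normalizer N_G(H) (and hence H is trivially a perfect code of N_G(H)). -/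
section Aux

abbrev G3 : Type := Matrix.SpecialLinearGroup (Fin 2) (ZMod 3)

instance : DecidableEq G3 := fun a b => decidable_of_iff (a.1 = b.1) Subtype.ext_iff.symm

lemma card_G3 : Nat.card G3 = 24 := by
  rw [Nat.card_eq_fintype_card]; decide

lemma invol_unique : ∀ x y : G3, x * x = 1 → y * y = 1 → ¬x = 1 → ¬y = 1 → x = y := by decide

lemma norm_key : ∀ c x : G3, c ^ 6 = 1 → ¬c ^ 2 = 1 → ¬c ^ 3 = 1 →
    (x*c*x⁻¹ = 1 ∨ x*c*x⁻¹ = c ∨ x*c*x⁻¹ = c^2 ∨ x*c*x⁻¹ = c^3 ∨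
      x*c*x⁻¹ = c^4 ∨ x*c*x⁻¹ = c^5) →
    (x = 1 ∨ x = c ∨ x = c^2 ∨ x = c^3 ∨ x = c^4 ∨ x = c^5) := by decide

lemma mem_zpowers_six {c y : G3} (hc : orderOf c = 6) (hy : y ∈ Subgroup.zpowers c) :
    y = 1 ∨ y = c ∨ y = c^2 ∨ y = c^3 ∨ y = c^4 ∨ y = c^5 := by
  have hne : orderOf c ≠ 0 := by omega
  have hfo : IsOfFinOrder c := by rwa [ne_eq, orderOf_eq_zero_iff, not_not] at hne
  obtain ⟨n, hn⟩ := (Submonoid.mem_powers_iff _ _).mp (hfo.mem_powers_iff_mem_zpowers.mpr hy)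
  have h6 : c ^ (n % 6) = y := by rw [← hc, pow_mod_orderOf]; exact hn
  have hm : n % 6 = 0 ∨ n % 6 = 1 ∨ n % 6 = 2 ∨ n % 6 = 3 ∨ n % 6 = 4 ∨ n % 6 = 5 := by omega
  rcases hm with h|h|h|h|h|h <;> rw [h] at h6
  · exact Or.inl (by simpa using h6.symm)
  · exact Or.inr (Or.inl (by simpa using h6.symm))
  · exact Or.inr (Or.inr (Or.inl h6.symm))
  · exact Or.inr (Or.inr (Or.inr (Or.inl h6.symm)))
  · exact Or.inr (Or.inr (Or.inr (Or.inr (Or.inl h6.symm))))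
  · exact Or.inr (Or.inr (Or.inr (Or.inr (Or.inr h6.symm))))

end Aux

set_option maxHeartbeats 1000000 in
theorem sl2_3_counterexample
    (H : Subgroup (Matrix.SpecialLinearGroup (Fin 2) (ZMod 3)))
    (hcyc : IsCyclic H) (hcard : Nat.card H = 6) :
    Subgroup.normalizer (H : Set (Matrix.SpecialLinearGroup (Fin 2) (ZMod 3))) = H ∧ ¬ IsPerfectCode H := by
  classical
  obtain ⟨c₀, hc₀⟩ := hcyc.exists_generator
  set c : G3 := (c₀ : G3) with hc_def
  have hord : orderOf c = 6 := by
    rw [hc_def]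
    rw [show ((c₀ : G3)) = H.subtype c₀ from rfl,
      orderOf_injective H.subtype H.subtype_injective c₀,
      orderOf_eq_card_of_forall_mem_zpowers hc₀, hcard]
  have hH : H = Subgroup.zpowers c := by
    apply le_antisymm
    · intro x hx
      obtain ⟨n, hn⟩ := Subgroup.mem_zpowers_iff.mp (hc₀ ⟨x, hx⟩)
      refine Subgroup.mem_zpowers_iff.mpr ⟨n, ?_⟩
      have := congrArg H.subtype hn
      simpa using this
    · rw [Subgroup.zpowers_le]; exact c₀.2
  have h6 : c ^ 6 = 1 := by rw [← hord]; exact pow_orderOf_eq_one c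
  have h2 : ¬ c ^ 2 = 1 := by
    intro h
    have := orderOf_dvd_of_pow_eq_one h
    rw [hord] at this
    exact absurd this (by norm_num)
  have h3 : ¬ c ^ 3 = 1 := by
    intro h
    have := orderOf_dvd_of_pow_eq_one h
    rw [hord] at this
    exact absurd this (by norm_num)
  constructor
  · refine le_antisymm (fun x hx => ?_) H.le_normalizer
    have hmem : x * c * x⁻¹ ∈ H := (Subgroup.mem_normalizer_iff.mp hx c).mp c₀.2
    rw [hH] at hmem ⊢
    have hd := mem_zpowers_six hord hmem
    have hx' := norm_key c x h6 h2 h3 hd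
    rcases hx' with h|h|h|h|h|h <;> rw [h]
    · exact Subgroup.one_mem _
    · exact Subgroup.mem_zpowers c
    all_goals exact Subgroup.pow_mem _ (Subgroup.mem_zpowers c) _
  · rintro ⟨T, hT1, hTinv, hTu⟩
    set z : G3 := c ^ 3 with hz_def
    have hzz : z * z = 1 := by rw [hz_def, ← pow_add]; exact h6
    have hzne : ¬ z = 1 := h3
    have hzH : z ∈ H := by rw [hH]; exact Subgroup.pow_mem _ (Subgroup.mem_zpowers c) 3
    have hTH : ∀ t, t ∈ T → t ∈ H → t = 1 := by
      intro t ht htH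
      exact (hTu 1).unique ⟨ht, by simpa using htH⟩ ⟨hT1, by simpa using H.one_mem⟩
    have hTinv' : ∀ t, t ∈ T → t⁻¹ ∈ T := by
      intro t ht
      rw [← hTinv]
      simpa using ht
    have hbij : Function.Bijective (fun t : T => ((t : G3) : G3 ⧸ H)) := by
      constructor
      · rintro ⟨t₁, h₁⟩ ⟨t₂, h₂⟩ h
        simp only at h
        have hmem : t₁⁻¹ * t₂ ∈ H := QuotientGroup.eq.mp h
        exact Subtype.ext ((hTu t₁).unique ⟨h₁, by simpa using H.one_mem⟩ ⟨h₂, hmem⟩)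
      · intro q
        refine QuotientGroup.induction_on q (fun g => ?_)
        obtain ⟨t, ⟨ht, hth⟩, -⟩ := hTu g
        exact ⟨⟨t, ht⟩, (QuotientGroup.eq.mpr hth).symm⟩
    have hT4 : Nat.card T = 4 := by
      rw [Nat.card_eq_of_bijective _ hbij]
      have hmi := H.card_mul_index
      rw [hcard, card_G3] at hmi
      rw [Subgroup.index_eq_card] at hmi
      omega
    have hfin : T.Finite := Set.toFinite T
    set F : Finset G3 := hfin.toFinset with hF
    have hmemF : ∀ x, x ∈ F ↔ x ∈ T := fun x => hfin.mem_toFinset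
    have hcardF : F.card = 4 := by
      rw [hF, ← Set.ncard_eq_toFinset_card T hfin, ← Nat.card_coe_set_eq]
      exact hT4
    set S : Finset G3 := F.erase 1 with hS
    have hcardS : S.card = 3 := by
      rw [hS, Finset.card_erase_of_mem ((hmemF 1).mpr hT1), hcardF]
    have hSmem : ∀ t, t ∈ S → t ∈ T ∧ t ≠ 1 := fun t ht =>
      ⟨(hmemF t).mp (Finset.mem_of_mem_erase ht), Finset.ne_of_mem_erase ht⟩
    have hSinv : ∀ t ∈ S, t⁻¹ ∈ S ∧ t⁻¹ ≠ t := by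
      intro t ht
      obtain ⟨htT, htne⟩ := hSmem t ht
      have h1 : t⁻¹ ∈ T := hTinv' t htT
      have h2' : t⁻¹ ≠ 1 := by simpa using htne
      refine ⟨Finset.mem_erase.mpr ⟨h2', (hmemF _).mpr h1⟩, ?_⟩
      intro heq
      have htt : t * t = 1 := by nth_rewrite 2 [← heq]; simp
      have htz : t = z := invol_unique t z htt hzz htne hzne
      exact htne (hTH t htT (htz ▸ hzH))
    obtain ⟨a, b, d, hab, had, hbd, habd⟩ := Finset.card_eq_three.mp hcardS
    have hmemS : ∀ t, t ∈ S ↔ (t = a ∨ t = b ∨ t = d) := by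
      intro t; rw [habd]; simp
    have hA := hSinv a ((hmemS a).mpr (Or.inl rfl))
    have hB := hSinv b ((hmemS b).mpr (Or.inr (Or.inl rfl)))
    have hD := hSinv d ((hmemS d).mpr (Or.inr (Or.inr rfl)))
    rw [hmemS] at hA hB hD
    obtain ⟨hA1, hA2⟩ := hA
    obtain ⟨hB1, hB2⟩ := hB
    obtain ⟨hD1, hD2⟩ := hD
    rcases hA1 with h|h|h
    · exact hA2 h
    · -- a⁻¹ = b
      have hb : b⁻¹ = a := by rw [← h, inv_inv]
      rcases hD1 with h'|h'|h'
      · -- d⁻¹ = a, so a⁻¹ = d, but a⁻¹ = b, b ≠ d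
        have : a⁻¹ = d := by rw [← h', inv_inv]
        exact hbd (h ▸ this ▸ rfl)
      · -- d⁻¹ = b, so b⁻¹ = d, but b⁻¹ = a, a ≠ d
        have : b⁻¹ = d := by rw [← h', inv_inv]
        exact had (hb ▸ this ▸ rfl)
      · exact hD2 h'
    · -- a⁻¹ = d
      have hd' : d⁻¹ = a := by rw [← h, inv_inv]
      rcases hB1 with h'|h'|h'
      · -- b⁻¹ = a, so a⁻¹ = b, but a⁻¹ = d
        have : a⁻¹ = b := by rw [← h', inv_inv]
        exact hbd (this ▸ h ▸ rfl)
      · exact hB2 h'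
      · -- b⁻¹ = d, so d⁻¹ = b, but d⁻¹ = a
        have hdb : d⁻¹ = b := by rw [← h', inv_inv]
        exact hab (hd'.symm.trans hdb)
end

section
/- Let G be a finite group, H a subgroup, and g ∈ G \ H with Hg^{-1}H = HgH. Then there exists a 2-element x ∈ G \ H such that x² ∈ H, HxH = HgH, and xHx^{-1} = gHg^{-1}. -/
open Pointwise

lemma conj_map_eq {G : Type*} [Group G] (H : Subgroup G) {k : G} (hk : k ∈ H) :
    H.map (MulAut.conj k).toMonoidHom = H := by
  ext z
  simp only [Subgroup.mem_map, MulEquiv.coe_toMonoidHom, MulAut.conj_apply]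
  constructor
  · rintro ⟨h, hh, rfl⟩
    exact H.mul_mem (H.mul_mem hk hh) (H.inv_mem hk)
  · intro hz
    exact ⟨k⁻¹ * z * k, H.mul_mem (H.mul_mem (H.inv_mem hk) hz) hk, by group⟩

lemma conj_map_mul {G : Type*} [Group G] (H : Subgroup G) (u v : G) :
    H.map (MulAut.conj (u * v)).toMonoidHom
      = (H.map (MulAut.conj v).toMonoidHom).map (MulAut.conj u).toMonoidHom := by
  rw [Subgroup.map_map]
  congr 1
  ext z
  simp [mul_assoc]

theorem exists_two_element_same_double_coset {G : Type*} [Group G] [Finite G]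
    (H : Subgroup G) (g : G) (hg : g ∉ H)
    (hgg : (H : Set G) * ({g⁻¹} : Set G) * (H : Set G) = (H : Set G) * ({g} : Set G) * (H : Set G)) :
    ∃ x : G, x ∉ H ∧ (∃ n : ℕ, orderOf x = 2 ^ n) ∧ x ^ 2 ∈ H ∧
      (H : Set G) * ({x} : Set G) * (H : Set G) = (H : Set G) * ({g} : Set G) * (H : Set G) ∧
      H.map (MulAut.conj x).toMonoidHom = H.map (MulAut.conj g).toMonoidHom := by
  -- g⁻¹ ∈ H g H
  have hmem : g⁻¹ ∈ (H : Set G) * ({g} : Set G) * (H : Set G) := by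
    rw [← hgg]
    exact ⟨g⁻¹, ⟨1, H.one_mem, g⁻¹, rfl, one_mul _⟩, 1, H.one_mem, mul_one _⟩
  obtain ⟨a, ha, b, hb, hab⟩ := DoubleCoset.mem_doubleCoset.mp hmem
  set y := g * b with hy
  have hy2 : y = a⁻¹ * g⁻¹ := by
    have : a * (g * b) = g⁻¹ := by rw [← mul_assoc, ← hab]
    rw [hy, ← this]; group
  have hysq : y ^ 2 ∈ H := by
    have h1 : y ^ 2 = a⁻¹ * g⁻¹ * (g * b) := by rw [pow_two]; nth_rewrite 1 [hy2]; rfl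
    have h2 : a⁻¹ * g⁻¹ * (g * b) = a⁻¹ * b := by group
    rw [h1, h2]
    exact H.mul_mem (H.inv_mem ha) hb
  have hev : ∀ m : ℕ, y ^ (2 * m) ∈ H := fun m => by
    rw [pow_mul]; exact pow_mem hysq m
  have hyH : y ∉ H := fun h => hg (by
    have : g = y * b⁻¹ := by rw [hy]; group
    rw [this]; exact H.mul_mem h (H.inv_mem hb))
  have hn : orderOf y ≠ 0 := (orderOf_pos y).ne'
  set k := (orderOf y).factorization 2 with hk
  set s := orderOf y / 2 ^ k with hs
  have hks : 2 ^ k * s = orderOf y := Nat.ordProj_mul_ordCompl_eq_self (orderOf y) 2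
  have hsodd : ¬ 2 ∣ s := Nat.not_dvd_ordCompl Nat.prime_two hn
  have hspos : 0 < s := Nat.ordCompl_pos 2 hn
  obtain ⟨m, hm⟩ : ∃ m, s = 2 * m + 1 := ⟨s / 2, by omega⟩
  refine ⟨y ^ s, ?_, ⟨k, ?_⟩, ?_, ?_, ?_⟩
  · -- y ^ s ∉ H
    intro hx
    apply hyH
    have h1 : y ^ s = y ^ (2 * m) * y := by rw [hm, pow_succ]
    have : y = (y ^ (2 * m))⁻¹ * y ^ s := by rw [h1]; group
    rw [this]
    exact H.mul_mem (H.inv_mem (hev m)) hx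
  · -- order
    rw [orderOf_pow, Nat.gcd_eq_right ⟨2 ^ k, by rw [← hks, mul_comm]⟩, ← hks,
      Nat.mul_div_cancel _ hspos]
  · -- (y^s)^2 ∈ H
    rw [← pow_mul, mul_comm s 2, pow_mul]
    exact pow_mem hysq s
  · -- doset equality
    have hx : y ^ s ∈ DoubleCoset.doubleCoset g (H : Set G) (H : Set G) := by
      refine DoubleCoset.mem_doubleCoset.mpr ⟨y ^ (2 * m), hev m, b, hb, ?_⟩
      rw [hm, pow_succ, hy, mul_assoc]
    exact DoubleCoset.doubleCoset_eq_of_mem hx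
  · -- conjugation
    have h1 : y ^ s = y * y ^ (2 * m) := by rw [hm, pow_succ']
    rw [h1, conj_map_mul, conj_map_eq H (hev m), hy, conj_map_mul, conj_map_eq H hb]
end
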